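/- arXiv:1604.00584 — 3 statements merged into one kernel-verified Lean document; each statement's English description precedes it below -/
import Mathlib

section
/- Let G be a group, H a separable subgroup of G, and K₊, K₋ subgroups of G with H ≤ K₊, H ≤ K₋, H ≠ K₊ and H ≠ K₋. Then there exist a finite group Q and a surjective group homomorphism φ : G → Q such that [Q : φ(H)] ≥ [Q : φ(K₊)] + [Q : φ(K₋)]. -/
/-!
Pick `x ∈ K₊ \ H` and `y ∈ K₋ \ H`. Separability of `H` gives finite-index normal subgroups
`N₊, N₋` with `x ∉ H N₊` and `y ∉ H N₋`. In the finite quotient `G ⧸ (N₊ ⊓ N₋)` the image of `H`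
is then a proper subgroup of the images of `K₊` and `K₋`, so its index is at least twice each
of theirs, hence at least their sum.
-/

/-- A subgroup `H` of a group `G` is *separable* if `H` equals the intersection of
all finite-index subgroups of `G` containing `H`. -/
def Subgroup.IsSeparable {G : Type*} [Group G] (H : Subgroup G) : Prop :=
  H = ⨅ K ∈ {K : Subgroup G | H ≤ K ∧ K.FiniteIndex}, K

namespace Subgroup

variable {G : Type*} [Group G] {H K : Subgroup G}

theorem IsSeparable.exists_finiteIndex_le_notMem (hH : H.IsSeparable) {x : G} (hx : x ∉ H) :
    ∃ L : Subgroup G, H ≤ L ∧ L.FiniteIndex ∧ x ∉ L := by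
  rw [hH] at hx
  simpa only [mem_iInf, Set.mem_ofPred_eq, not_forall, exists_prop, and_assoc] using hx

theorem IsSeparable.exists_normal_finiteIndex_notMem_sup (hH : H.IsSeparable) {x : G}
    (hx : x ∉ H) : ∃ N : Subgroup G, N.Normal ∧ N.FiniteIndex ∧ x ∉ H ⊔ N := by
  obtain ⟨L, hHL, hL, hxL⟩ := hH.exists_finiteIndex_le_notMem hx
  exact ⟨L.normalCore, L.normalCore_normal, inferInstance,
    fun hx' => hxL (sup_le hHL L.normalCore_le hx')⟩

theorem two_mul_index_le_of_lt (h : H < K) [H.FiniteIndex] : 2 * K.index ≤ H.index := by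
  have h0 : H.relIndex K ≠ 0 := isFiniteRelIndex_of_finiteIndex.relIndex_ne_zero
  have h1 : H.relIndex K ≠ 1 := mt relIndex_eq_one.mp h.not_ge
  calc 2 * K.index ≤ H.relIndex K * K.index := Nat.mul_le_mul_right _ (by omega)
    _ = H.index := relIndex_mul_index h.le

theorem two_mul_index_map_le_of_notMem_sup_ker {Q : Type*} [Group Q] [Finite Q] (f : G →* Q)
    (hHK : H ≤ K) {x : G} (hxK : x ∈ K) (hxH : x ∉ H ⊔ f.ker) :
    2 * (K.map f).index ≤ (H.map f).index := by
  refine two_mul_index_le_of_lt (lt_of_le_of_ne (map_mono hHK) fun hHK' => hxH ?_)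
  rw [← comap_map_eq, hHK']
  exact mem_map_of_mem f hxK

theorem exists_surjective_ker_eq_of_finiteIndex (N : Subgroup G) [N.Normal] [N.FiniteIndex] :
    ∃ (Q : Type) (_ : Group Q) (_ : Finite Q) (φ : G →* Q),
      Function.Surjective φ ∧ φ.ker = N := by
  let e : G ⧸ N ≃* Shrink.{0} (G ⧸ N) := Shrink.mulEquiv.symm
  refine ⟨Shrink.{0} (G ⧸ N), inferInstance, inferInstance,
    (e : G ⧸ N →* _).comp (QuotientGroup.mk' N),
    e.surjective.comp (QuotientGroup.mk'_surjective N), ?_⟩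
  rw [MonoidHom.ker_mulEquiv_comp, QuotientGroup.ker_mk']

end Subgroup

theorem separable_subgroup_index_inequality_in_finite_quotient
    {G : Type*} [Group G] (H : Subgroup G) (hH : H.IsSeparable)
    (Kp Km : Subgroup G) (hKp : H ≤ Kp) (hKm : H ≤ Km)
    (hnep : H ≠ Kp) (hnem : H ≠ Km) :
    ∃ (Q : Type) (_ : Group Q) (_ : Finite Q) (φ : G →* Q),
      Function.Surjective φ ∧
        (Subgroup.map φ H).index ≥ (Subgroup.map φ Kp).index + (Subgroup.map φ Km).index := by
  obtain ⟨x, hxKp, hxH⟩ := SetLike.exists_of_lt (lt_of_le_of_ne hKp hnep)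
  obtain ⟨y, hyKm, hyH⟩ := SetLike.exists_of_lt (lt_of_le_of_ne hKm hnem)
  obtain ⟨Np, _, _, hxNp⟩ := hH.exists_normal_finiteIndex_notMem_sup hxH
  obtain ⟨Nm, _, _, hyNm⟩ := hH.exists_normal_finiteIndex_notMem_sup hyH
  obtain ⟨Q, _, hQ, φ, hφ, hker⟩ := (Np ⊓ Nm).exists_surjective_ker_eq_of_finiteIndex
  refine ⟨Q, _, hQ, φ, hφ, ?_⟩
  have hp := Subgroup.two_mul_index_map_le_of_notMem_sup_ker φ hKp hxKp
    fun hx => hxNp (sup_le_sup_left (hker.trans_le inf_le_left) H hx)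
  have hm := Subgroup.two_mul_index_map_le_of_notMem_sup_ker φ hKm hyKm
    fun hy => hyNm (sup_le_sup_left (hker.trans_le inf_le_right) H hy)
  omega
end

section
/- Let F = ℂ(t), O the valuation ring of the order-of-vanishing-at-0 valuation on F, and for n ∈ ℤ let Λ_n ⊆ F² be the O-span of (tⁿ,0),(0,t⁻ⁿ) and Λ'_n the O-span of (tⁿ,0),(0,t⁻ⁿ⁻¹). Let d ≥ 1, n : Fin d → ℤ, and let s be a nonempty subset of Fin d. In the module ∏_{i ∈ Fin d} F², define the O-submodules Λ₊ = ∏ᵢ Λ_{n i + c i}, Λ₋ = ∏ᵢ Λ_{n i}, and Λ' = ∏ᵢ Mᵢ, where c i = 1 if i ∈ s and c i = 0 otherwise, and Mᵢ = Λ'_{n i} if i ∈ s and Mᵢ = Λ_{n i} otherwise. Then t•Λ' ⊊ Λ₊ ⊊ Λ' and t•Λ' ⊊ Λ₋ ⊊ Λ'. -/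
/-!
All lattices involved are diagonal, spanned by `(tᵃ, 0)` and `(0, tᵇ)`, and such lattices are
ordered exactly as their exponent pairs `(a, b)` are, componentwise and reversed; multiplying by
`t` raises both exponents by one. A product of submodules over all indices is strictly contained
in another iff this holds factorwise with at least one strict factor, so every relation reduces to
inequalities between exponents, the strict one coming from an index in `s`.
-/

set_option synthInstance.maxHeartbeats 1000000

open Polynomial Pointwise

/-- The valuation ring of the order-of-vanishing-at-0 valuation on `F = ℂ(t)`,
i.e. the `(t)`-adic valuation subring of the rational function field `RatFunc ℂ`
(the localization of `ℂ[t]` at the prime ideal `(t)`). -/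
noncomputable abbrev Ozero : ValuationSubring (RatFunc ℂ) :=
  ((Polynomial.idealX ℂ).valuation (RatFunc ℂ)).valuationSubring

/-- The lattice `Λ_n ⊆ F²` spanned over `O` by `(tⁿ, 0)` and `(0, t⁻ⁿ)`. -/
noncomputable def Lam (n : ℤ) : Submodule Ozero (RatFunc ℂ × RatFunc ℂ) :=
  Submodule.span Ozero {((RatFunc.X : RatFunc ℂ) ^ n, 0), (0, (RatFunc.X : RatFunc ℂ) ^ (-n))}

/-- The lattice `Λ'_n ⊆ F²` spanned over `O` by `(tⁿ, 0)` and `(0, t⁻ⁿ⁻¹)`. -/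
noncomputable def Lam' (n : ℤ) : Submodule Ozero (RatFunc ℂ × RatFunc ℂ) :=
  Submodule.span Ozero {((RatFunc.X : RatFunc ℂ) ^ n, 0), (0, (RatFunc.X : RatFunc ℂ) ^ (-n - 1))}

namespace Submodule

variable {R ι : Type*} {φ : ι → Type*} [Semiring R] [∀ i, AddCommMonoid (φ i)]
  [∀ i, Module R (φ i)] {p q : (i : ι) → Submodule R (φ i)}

theorem pi_univ_le_pi_univ_iff : pi Set.univ p ≤ pi Set.univ q ↔ p ≤ q := by
  rw [← SetLike.coe_subset_coe, coe_pi, coe_pi, Set.univ_pi_subset_univ_pi_iff]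
  simp [Pi.le_def, ← SetLike.coe_subset_coe, (p _).nonempty.ne_empty]

theorem pi_univ_lt_pi_univ_iff : pi Set.univ p < pi Set.univ q ↔ p < q := by
  simp only [lt_iff_le_not_ge, pi_univ_le_pi_univ_iff]

theorem pointwise_smul_pi_univ {α : Type*} [Monoid α] [∀ i, DistribMulAction α (φ i)]
    [∀ i, SMulCommClass α R (φ i)] (c : α) (p : (i : ι) → Submodule R (φ i)) :
    c • pi Set.univ p = pi Set.univ (c • p) :=
  SetLike.coe_injective <| by
    simp only [coe_pointwise_smul, coe_pi, Set.smul_set_univ_pi]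
    rfl

end Submodule

section DiagLattice

variable {K : Type*} [Field K] (O : ValuationSubring K) (π : K)

def diagLattice (a b : ℤ) : Submodule O (K × K) :=
  Submodule.span O {(π ^ a, 0), (0, π ^ b)}

variable {O π}

theorem mem_diagLattice_iff (hπ : π ≠ 0) {a b : ℤ} {x y : K} :
    (x, y) ∈ diagLattice O π a b ↔ x * π ^ (-a) ∈ O ∧ y * π ^ (-b) ∈ O := by
  have exists_smul_eq_iff {u : K} (hu : u ≠ 0) (z : K) :
      (∃ c : O, c • u = z) ↔ z * u⁻¹ ∈ O :=
    ⟨fun ⟨c, hc⟩ => by simp [← hc, Algebra.smul_def, hu],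
      fun hz => ⟨⟨_, hz⟩, by simp [Algebra.smul_def, hu]⟩⟩
  rw [diagLattice, Submodule.mem_span_pair]
  simp only [Prod.smul_mk, smul_zero, Prod.mk_add_mk, add_zero, zero_add, Prod.mk.injEq,
    exists_and_right, exists_and_left, zpow_neg, exists_smul_eq_iff (zpow_ne_zero _ hπ)]

theorem diagLattice_le_diagLattice_iff (hπ : ∀ k : ℤ, π ^ k ∈ O ↔ 0 ≤ k)
    {a b a' b' : ℤ} :
    diagLattice O π a b ≤ diagLattice O π a' b' ↔ a' ≤ a ∧ b' ≤ b := by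
  have hπ0 : π ≠ 0 := by
    rintro rfl
    simpa using hπ (-1)
  rw [diagLattice, Submodule.span_le, Set.insert_subset_iff, Set.singleton_subset_iff]
  simp only [SetLike.mem_coe, mem_diagLattice_iff hπ0, ← zpow_add₀ hπ0, hπ, zero_mul,
    zero_mem, and_true, true_and]
  omega

theorem smul_diagLattice (hπ : π ≠ 0) (a b : ℤ) :
    π • diagLattice O π a b = diagLattice O π (a + 1) (b + 1) := by
  simp only [diagLattice, Submodule.smul_span, Set.smul_set_insert, Set.smul_set_singleton,
    Prod.smul_mk, smul_eq_mul, zpow_add_one₀ hπ, mul_comm π, zero_mul]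

end DiagLattice

theorem X_zpow_mem_Ozero_iff (k : ℤ) : (RatFunc.X : RatFunc ℂ) ^ k ∈ Ozero ↔ 0 ≤ k := by
  rw [Valuation.mem_valuationSubring_iff, map_zpow₀, Polynomial.valuation_X_eq_neg_one,
    ← WithZero.exp_zsmul, ← WithZero.exp_zero, WithZero.exp_le_exp, smul_eq_mul]
  omega

theorem Lam_eq_diagLattice (n : ℤ) : Lam n = diagLattice Ozero RatFunc.X n (-n) := rfl

theorem Lam'_eq_diagLattice (n : ℤ) : Lam' n = diagLattice Ozero RatFunc.X n (-n - 1) := rfl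

theorem flag_relations_pi_general (d : ℕ) (n : Fin d → ℤ)
    (s : Finset (Fin d)) (hs : s.Nonempty) :
    (RatFunc.X : RatFunc ℂ) •
        Submodule.pi Set.univ (fun i : Fin d => if i ∈ s then Lam' (n i) else Lam (n i)) <
      Submodule.pi Set.univ (fun i : Fin d => Lam (n i + if i ∈ s then 1 else 0)) ∧
    Submodule.pi Set.univ (fun i : Fin d => Lam (n i + if i ∈ s then 1 else 0)) <
      Submodule.pi Set.univ (fun i : Fin d => if i ∈ s then Lam' (n i) else Lam (n i)) ∧
    (RatFunc.X : RatFunc ℂ) •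
        Submodule.pi Set.univ (fun i : Fin d => if i ∈ s then Lam' (n i) else Lam (n i)) <
      Submodule.pi Set.univ (fun i : Fin d => Lam (n i)) ∧
    Submodule.pi Set.univ (fun i : Fin d => Lam (n i)) <
      Submodule.pi Set.univ (fun i : Fin d => if i ∈ s then Lam' (n i) else Lam (n i)) := by
  obtain ⟨i₀, hi₀⟩ := hs
  simp only [Submodule.pointwise_smul_pi_univ, Submodule.pi_univ_lt_pi_univ_iff, Pi.lt_def,
    Pi.le_def, Pi.smul_apply]
  refine ⟨⟨fun i => ?_, i₀, ?_⟩, ⟨fun i => ?_, i₀, ?_⟩,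
    ⟨fun i => ?_, i₀, ?_⟩, ⟨fun i => ?_, i₀, ?_⟩⟩
  all_goals
    split_ifs <;>
    simp only [Lam_eq_diagLattice, Lam'_eq_diagLattice,
      smul_diagLattice (RatFunc.X_ne_zero (K := ℂ)), lt_iff_le_not_ge,
      diagLattice_le_diagLattice_iff X_zpow_mem_Ozero_iff] <;>
    omega

theorem flag_relations_pi (d : ℕ) (hd : 1 ≤ d) (n : Fin d → ℤ)
    (s : Finset (Fin d)) (hs : s.Nonempty) :
    (RatFunc.X : RatFunc ℂ) •
        Submodule.pi Set.univ (fun i : Fin d => if i ∈ s then Lam' (n i) else Lam (n i)) <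
      Submodule.pi Set.univ (fun i : Fin d => Lam (n i + if i ∈ s then 1 else 0)) ∧
    Submodule.pi Set.univ (fun i : Fin d => Lam (n i + if i ∈ s then 1 else 0)) <
      Submodule.pi Set.univ (fun i : Fin d => if i ∈ s then Lam' (n i) else Lam (n i)) ∧
    (RatFunc.X : RatFunc ℂ) •
        Submodule.pi Set.univ (fun i : Fin d => if i ∈ s then Lam' (n i) else Lam (n i)) <
      Submodule.pi Set.univ (fun i : Fin d => Lam (n i)) ∧
    Submodule.pi Set.univ (fun i : Fin d => Lam (n i)) <
      Submodule.pi Set.univ (fun i : Fin d => if i ∈ s then Lam' (n i) else Lam (n i)) :=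
  flag_relations_pi_general d n s hs
end

section
/- Let F = ℂ(t), O the valuation ring of the order-of-vanishing-at-0 valuation on F, and for n ∈ ℤ let Λ_n ⊆ F² be the O-span of (tⁿ,0),(0,t⁻ⁿ). Let d ≥ 1, σ a permutation of Fin d, and m, n : Fin d → ℤ. Consider the F-linear map T on ∏_{i ∈ Fin d} F² sending (xⱼ, yⱼ)_{j} to the tuple whose σ(j)-th component is (t^{m j}·xⱼ, t^{-m j}·yⱼ). Then the image under T of the O-submodule ∏ᵢ Λ_{n i} equals ∏ᵢ Λ_{n(σ⁻¹ i) + m(σ⁻¹ i)}. -/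
/-!
`T` is a permutation of the blocks followed by the diagonal maps `diag(t^m, t^{-m})`. The
diagonal map sends the two generators of `Λ_n` to those of `Λ_{n+m}`, and permuting blocks
only reindexes a product of submodules, because every tuple of preimages can be reassembled
along the permutation.
-/

set_option maxHeartbeats 1000000
set_option synthInstance.maxHeartbeats 1000000

open Polynomial Pointwise

/-- The `F`-linear map `(x, y) ↦ (tᵐ·x, t⁻ᵐ·y)` on `F²`, i.e. the action of the
matrix `diag(tᵐ, t⁻ᵐ) ∈ SL₂(F)`. -/
noncomputable def diagMap (m : ℤ) : (RatFunc ℂ × RatFunc ℂ) →ₗ[RatFunc ℂ] (RatFunc ℂ × RatFunc ℂ) :=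
  LinearMap.prodMap
    ((RatFunc.X : RatFunc ℂ) ^ m • LinearMap.id)
    ((RatFunc.X : RatFunc ℂ) ^ (-m) • LinearMap.id)

/-- The block-monomial `F`-linear map on `∏_{i ∈ Fin d} F²` sending `(xⱼ, yⱼ)ⱼ` to the
tuple whose `σ(j)`-th component is `(t^{m j}·xⱼ, t^{-m j}·yⱼ)`. -/
noncomputable def blockMonomialMap (d : ℕ) (σ : Equiv.Perm (Fin d)) (m : Fin d → ℤ) :
    (Fin d → RatFunc ℂ × RatFunc ℂ) →ₗ[RatFunc ℂ] (Fin d → RatFunc ℂ × RatFunc ℂ) :=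
  LinearMap.pi fun i => (diagMap (m (σ⁻¹ i))).comp (LinearMap.proj (σ⁻¹ i))

theorem Submodule.map_pi_comp_proj_equiv {R ι κ M N : Type*} [Semiring R]
    [AddCommMonoid M] [Module R M] [AddCommMonoid N] [Module R N]
    (τ : κ ≃ ι) (f : κ → M →ₗ[R] N) (p : ι → Submodule R M) :
    (Submodule.pi Set.univ p).map (LinearMap.pi fun k => (f k).comp (LinearMap.proj (τ k))) =
      Submodule.pi Set.univ fun k => (p (τ k)).map (f k) := by
  apply le_antisymm
  · rintro _ ⟨y, hy, rfl⟩ k -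
    exact Submodule.mem_map_of_mem (hy (τ k) trivial)
  · intro x hx
    choose y hy hyx using fun k => Submodule.mem_map.mp (hx k trivial)
    refine ⟨fun i => y (τ.symm i), fun i _ => ?_, funext fun k => ?_⟩
    · simpa using hy (τ.symm i)
    · simpa using hyx k

lemma diagMap_apply (m : ℤ) (v : RatFunc ℂ × RatFunc ℂ) :
    diagMap m v = ((RatFunc.X : RatFunc ℂ) ^ m * v.1, (RatFunc.X : RatFunc ℂ) ^ (-m) * v.2) := by
  simp [diagMap, smul_eq_mul]

lemma map_diagMap_Lam (m n : ℤ) :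
    (Lam n).map ((diagMap m).restrictScalars Ozero) = Lam (n + m) := by
  rw [Lam, Lam, Submodule.map_span, Set.image_pair]
  simp only [LinearMap.restrictScalars_apply, diagMap_apply, mul_zero,
    ← zpow_add₀ (RatFunc.X_ne_zero (K := ℂ))]
  rw [add_comm m n, neg_add_rev]

theorem image_pi_lattice_under_blockMonomialMap_general
    (d : ℕ) (σ : Equiv.Perm (Fin d)) (m n : Fin d → ℤ) :
    Submodule.map ((blockMonomialMap d σ m).restrictScalars Ozero)
        (Submodule.pi Set.univ fun i : Fin d => Lam (n i)) =
      Submodule.pi Set.univ (fun i : Fin d => Lam (n (σ⁻¹ i) + m (σ⁻¹ i))) := by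
  refine (Submodule.map_pi_comp_proj_equiv σ⁻¹
    (fun i => (diagMap (m (σ⁻¹ i))).restrictScalars Ozero) fun i => Lam (n i)).trans ?_
  simp only [map_diagMap_Lam]

theorem image_pi_lattice_under_blockMonomialMap
    (d : ℕ) (hd : 1 ≤ d) (σ : Equiv.Perm (Fin d)) (m n : Fin d → ℤ) :
    Submodule.map ((blockMonomialMap d σ m).restrictScalars Ozero)
        (Submodule.pi Set.univ fun i : Fin d => Lam (n i)) =
      Submodule.pi Set.univ (fun i : Fin d => Lam (n (σ⁻¹ i) + m (σ⁻¹ i))) :=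
  image_pi_lattice_under_blockMonomialMap_general d σ m n
end
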